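/- Let N = FreeAlgebra ℤ {n : ℕ // 0 < n}, the free associative ℤ-algebra on generators z₁, z₂, z₃, …, one for each positive integer, and set z₀ = 1. Let Δ : N → N ⊗[ℤ] N be the unique ℤ-algebra homomorphism with Δ(z_n) = Σ_{s+t=n, s,t ≥ 0} z_s ⊗ z_t for each n ≥ 1, and let ε : N → ℤ be the unique ℤ-algebra homomorphism with ε(z_n) = 0 for all n ≥ 1. Then ε is a counit for Δ: the composites (ε ⊗ id) ∘ Δ and (id ⊗ ε) ∘ Δ both equal the identity of N after the canonical identifications ℤ ⊗[ℤ] N ≅ N and N ⊗[ℤ] ℤ ≅ N. Moreover there exists a ℤ-linear map S : N → N (an antipode) such that mul ∘ (S ⊗ id) ∘ Δ = (algebraMap ℤ N) ∘ ε and mul ∘ (id ⊗ S) ∘ Δ = (algebraMap ℤ N) ∘ ε, where mul : N ⊗[ℤ] N → N is the linear map induced by multiplication. -/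

import Mathlib

open TensorProduct

/-- The generators `z n` of the free `ℤ`-algebra on the positive integers,
with the convention `z 0 = 1`. -/
noncomputable def zGen : ℕ → FreeAlgebra ℤ {n : ℕ // 0 < n} := fun n =>
  if h : 0 < n then FreeAlgebra.ι ℤ ⟨n, h⟩ else 1

/-!
The counit identities are identities of algebra maps out of a free algebra, so they reduce to the
generators, where `∑_{s+t=n} ε(z_s) z_t = z_n` because only `s = 0` contributes.

For the antipode, the identity on `z_n` says `∑_{s+t=n} S(z_s) z_t = δ_{n,0}`, i.e. that
`∑ S(z_n) X^n` is a left inverse of `Z(X) = ∑ z_n X^n` in `N⟦X⟧`. Since `Z(0) = 1`, `Z` has a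
two-sided inverse, and `S` is taken to be the anti-homomorphism sending `z_n` to the `n`-th
coefficient of `Z⁻¹`; the right-hand identity on generators is then `Z Z⁻¹ = 1`. The identities
pass from generators to products because, for anti-multiplicative `S`, the map
`m ∘ (S ⊗ id)` sends `u * (b ⊗ b')` to `S(b) · m((S ⊗ id) u) · b'`, so a scalar value at `Δx`
factors out of the value at `Δ(xy) = Δx Δy`.
-/

section AntipodeIdentity

variable {R A : Type*} [CommSemiring R] [Semiring A] [Algebra R A] (S : A →ₗ[R] A)

noncomputable def mulMapLeft : A ⊗[R] A →ₗ[R] A :=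
  LinearMap.mul' R A ∘ₗ TensorProduct.map S LinearMap.id

noncomputable def mulMapRight : A ⊗[R] A →ₗ[R] A :=
  LinearMap.mul' R A ∘ₗ TensorProduct.map LinearMap.id S

@[simp] lemma mulMapLeft_tmul (a b : A) : mulMapLeft S (a ⊗ₜ b) = S a * b := rfl
@[simp] lemma mulMapRight_tmul (a b : A) : mulMapRight S (a ⊗ₜ b) = a * S b := rfl

variable {S}

lemma mulMapLeft_mul_tmul (hS : ∀ x y, S (x * y) = S y * S x) (u : A ⊗[R] A) (b b' : A) :
    mulMapLeft S (u * b ⊗ₜ b') = S b * mulMapLeft S u * b' := by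
  induction u using TensorProduct.induction_on with
  | zero => simp
  | tmul a a' => simp [hS, mul_assoc]
  | add u v hu hv => simp [add_mul, mul_add, hu, hv]

lemma mulMapRight_tmul_mul (hS : ∀ x y, S (x * y) = S y * S x) (a a' : A) (v : A ⊗[R] A) :
    mulMapRight S (a ⊗ₜ a' * v) = a * mulMapRight S v * S a' := by
  induction v using TensorProduct.induction_on with
  | zero => simp
  | tmul b b' => simp [hS, mul_assoc]
  | add u v hu hv => simp [add_mul, mul_add, hu, hv]

lemma mulMapLeft_mul_of_eq_algebraMap (hS : ∀ x y, S (x * y) = S y * S x)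
    {u : A ⊗[R] A} {r : R} (hu : mulMapLeft S u = algebraMap R A r) (v : A ⊗[R] A) :
    mulMapLeft S (u * v) = r • mulMapLeft S v := by
  induction v using TensorProduct.induction_on with
  | zero => simp
  | tmul b b' => simp [mulMapLeft_mul_tmul hS, hu, Algebra.commutes, Algebra.smul_def, mul_assoc]
  | add v w hv hw => simp [mul_add, hv, hw]

lemma mulMapRight_mul_of_eq_algebraMap (hS : ∀ x y, S (x * y) = S y * S x)
    {v : A ⊗[R] A} {r : R} (hv : mulMapRight S v = algebraMap R A r) (u : A ⊗[R] A) :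
    mulMapRight S (u * v) = r • mulMapRight S u := by
  induction u using TensorProduct.induction_on with
  | zero => simp
  | tmul a a' => simp [mulMapRight_tmul_mul hS, hv, Algebra.commutes, Algebra.smul_def, mul_assoc]
  | add u w hu hw => simp [add_mul, hu, hw]

variable {X : Type*} {S : FreeAlgebra R X →ₗ[R] FreeAlgebra R X}
  (Δ : FreeAlgebra R X →ₐ[R] FreeAlgebra R X ⊗[R] FreeAlgebra R X) (ε : FreeAlgebra R X →ₐ[R] R)

theorem mulMapLeft_comp_eq_of_ι (hS : ∀ x y, S (x * y) = S y * S x) (hS₁ : S 1 = 1)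
    (h : ∀ i, mulMapLeft S (Δ (FreeAlgebra.ι R i)) = algebraMap R _ (ε (FreeAlgebra.ι R i))) :
    mulMapLeft S ∘ₗ Δ.toLinearMap = Algebra.linearMap R _ ∘ₗ ε.toLinearMap := by
  ext x
  induction x using FreeAlgebra.induction with
  | grade0 r => simp [Algebra.algebraMap_eq_smul_one, Algebra.TensorProduct.one_def, hS₁]
  | grade1 i => exact h i
  | mul x y hx hy =>
    simp only [LinearMap.comp_apply, AlgHom.toLinearMap_apply, Algebra.linearMap_apply] at hx hy ⊢
    rw [map_mul, mulMapLeft_mul_of_eq_algebraMap hS hx, hy, map_mul, map_mul, Algebra.smul_def]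
  | add x y hx hy => simp_all

theorem mulMapRight_comp_eq_of_ι (hS : ∀ x y, S (x * y) = S y * S x) (hS₁ : S 1 = 1)
    (h : ∀ i, mulMapRight S (Δ (FreeAlgebra.ι R i)) = algebraMap R _ (ε (FreeAlgebra.ι R i))) :
    mulMapRight S ∘ₗ Δ.toLinearMap = Algebra.linearMap R _ ∘ₗ ε.toLinearMap := by
  ext x
  induction x using FreeAlgebra.induction with
  | grade0 r => simp [Algebra.algebraMap_eq_smul_one, Algebra.TensorProduct.one_def, hS₁]
  | grade1 i => exact h i
  | mul x y hx hy =>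
    simp only [LinearMap.comp_apply, AlgHom.toLinearMap_apply, Algebra.linearMap_apply] at hx hy ⊢
    rw [map_mul, mulMapRight_mul_of_eq_algebraMap hS hy, hx, map_mul, map_mul, Algebra.smul_def,
      Algebra.commutes]
  | add x y hx hy => simp_all

end AntipodeIdentity

local notation "NSymm" => FreeAlgebra ℤ {n : ℕ // 0 < n}

section NonSymmetricFunctions

-- `Module ℤ NSymm` has two instances, `Algebra.toModule` and `AddCommGroup.toIntModule`, equal
-- only up to unfolding; the tensor product in the statement is built from the former.
attribute [local instance 2000] Algebra.toModule

lemma zGen_of_pos {n : ℕ} (hn : 0 < n) : zGen n = FreeAlgebra.ι ℤ ⟨n, hn⟩ := dif_pos hn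

open PowerSeries in
noncomputable def antipodeCoeff (n : ℕ) : NSymm :=
  coeff n (invOfUnit (mk zGen) 1)

lemma constantCoeff_mk_zGen : PowerSeries.constantCoeff (PowerSeries.mk zGen) = ↑(1 : NSymmˣ) := by
  simp [zGen]

lemma antipodeCoeff_zero : antipodeCoeff 0 = 1 := by
  simp [antipodeCoeff]

lemma sum_antidiagonal_antipodeCoeff_mul_zGen (n : ℕ) :
    ∑ p ∈ Finset.HasAntidiagonal.antidiagonal n, antipodeCoeff p.1 * zGen p.2 =
      if n = 0 then 1 else 0 := by
  simpa [antipodeCoeff, PowerSeries.coeff_mul, PowerSeries.coeff_one] using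
    congrArg (PowerSeries.coeff n) (PowerSeries.invOfUnit_mul _ _ constantCoeff_mk_zGen)

lemma sum_antidiagonal_zGen_mul_antipodeCoeff (n : ℕ) :
    ∑ p ∈ Finset.HasAntidiagonal.antidiagonal n, zGen p.1 * antipodeCoeff p.2 =
      if n = 0 then 1 else 0 := by
  simpa [antipodeCoeff, PowerSeries.coeff_mul, PowerSeries.coeff_one] using
    congrArg (PowerSeries.coeff n) (PowerSeries.mul_invOfUnit _ _ constantCoeff_mk_zGen)

noncomputable def antipode : NSymm →ₗ[ℤ] NSymm :=
  (MulOpposite.opLinearEquiv ℤ).symm.toLinearMap ∘ₗ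
    (FreeAlgebra.lift ℤ fun i : {n : ℕ // 0 < n} => MulOpposite.op (antipodeCoeff i)).toLinearMap

lemma antipode_one : antipode 1 = 1 := by simp [antipode]

lemma antipode_mul (x y : NSymm) : antipode (x * y) = antipode y * antipode x := by
  simp [antipode]

lemma antipode_zGen (n : ℕ) : antipode (zGen n) = antipodeCoeff n := by
  rcases n.eq_zero_or_pos with rfl | hn
  · simp [zGen, antipode_one, antipodeCoeff_zero]
  · simp [zGen, hn, antipode]

def IsNSymmCoproduct (Δ : NSymm →ₐ[ℤ] NSymm ⊗[ℤ] NSymm) : Prop :=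
  ∀ (n : ℕ) (hn : 0 < n), Δ (FreeAlgebra.ι ℤ ⟨n, hn⟩) =
    ∑ p ∈ Finset.HasAntidiagonal.antidiagonal n, zGen p.1 ⊗ₜ[ℤ] zGen p.2

variable {Δ : NSymm →ₐ[ℤ] NSymm ⊗[ℤ] NSymm} {ε : NSymm →ₐ[ℤ] ℤ}

lemma counit_zGen (hε : ∀ n, ε (FreeAlgebra.ι ℤ n) = 0) (k : ℕ) :
    ε (zGen k) = if k = 0 then 1 else 0 := by
  rcases k.eq_zero_or_pos with rfl | hk
  · simp [zGen]
  · simp [zGen, hk, hε, hk.ne']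

lemma sum_antidiagonal_counit_smul_zGen (hε : ∀ n, ε (FreeAlgebra.ι ℤ n) = 0) (n : ℕ) :
    ∑ p ∈ Finset.HasAntidiagonal.antidiagonal n, ε (zGen p.1) • zGen p.2 = zGen n := by
  rw [Finset.sum_eq_single_of_mem (0, n) (by simp)]
  · simp [zGen]
  · rintro ⟨s, t⟩ hst hne
    have hs : s ≠ 0 := by rintro rfl; simp_all
    simp [counit_zGen hε, hs]

theorem lid_comp_map_counit_id_comp_eq_id
    (hΔ : IsNSymmCoproduct Δ)
    (hε : ∀ n, ε (FreeAlgebra.ι ℤ n) = 0) :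
    (Algebra.TensorProduct.lid ℤ NSymm).toAlgHom.comp
      ((Algebra.TensorProduct.map ε (AlgHom.id ℤ NSymm)).comp Δ) = AlgHom.id ℤ NSymm := by
  refine FreeAlgebra.hom_ext (funext fun ⟨n, hn⟩ => ?_)
  simp only [AlgHom.coe_comp, AlgEquiv.coe_toAlgHom, Function.comp_apply, hΔ n hn, map_sum,
    Algebra.TensorProduct.map_tmul, AlgHom.coe_id, id_eq, Algebra.TensorProduct.lid_tmul]
  exact (sum_antidiagonal_counit_smul_zGen hε n).trans (zGen_of_pos hn)

theorem rid_comp_map_id_counit_comp_eq_id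
    (hΔ : IsNSymmCoproduct Δ)
    (hε : ∀ n, ε (FreeAlgebra.ι ℤ n) = 0) :
    (Algebra.TensorProduct.rid ℤ ℤ NSymm).toAlgHom.comp
      ((Algebra.TensorProduct.map (AlgHom.id ℤ NSymm) ε).comp Δ) = AlgHom.id ℤ NSymm := by
  refine FreeAlgebra.hom_ext (funext fun ⟨n, hn⟩ => ?_)
  simp only [AlgHom.coe_comp, AlgEquiv.coe_toAlgHom, Function.comp_apply, hΔ n hn, map_sum,
    Algebra.TensorProduct.map_tmul, AlgHom.coe_id, id_eq, Algebra.TensorProduct.rid_tmul]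
  rw [← Finset.Nat.sum_antidiagonal_swap]
  simp only [Prod.fst_swap, Prod.snd_swap]
  exact (sum_antidiagonal_counit_smul_zGen hε n).trans (zGen_of_pos hn)

theorem mulMapLeft_antipode_comp_eq
    (hΔ : IsNSymmCoproduct Δ)
    (hε : ∀ n, ε (FreeAlgebra.ι ℤ n) = 0) :
    mulMapLeft antipode ∘ₗ Δ.toLinearMap = Algebra.linearMap ℤ NSymm ∘ₗ ε.toLinearMap := by
  refine mulMapLeft_comp_eq_of_ι Δ ε antipode_mul antipode_one fun ⟨n, hn⟩ => ?_
  simp [hΔ n hn, hε, map_sum, antipode_zGen, sum_antidiagonal_antipodeCoeff_mul_zGen, hn.ne']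

theorem mulMapRight_antipode_comp_eq
    (hΔ : IsNSymmCoproduct Δ)
    (hε : ∀ n, ε (FreeAlgebra.ι ℤ n) = 0) :
    mulMapRight antipode ∘ₗ Δ.toLinearMap = Algebra.linearMap ℤ NSymm ∘ₗ ε.toLinearMap := by
  refine mulMapRight_comp_eq_of_ι Δ ε antipode_mul antipode_one fun ⟨n, hn⟩ => ?_
  simp [hΔ n hn, hε, map_sum, antipode_zGen, sum_antidiagonal_zGen_mul_antipodeCoeff, hn.ne']

end NonSymmetricFunctions

/-- On `N = FreeAlgebra ℤ {n : ℕ // 0 < n}` (the algebra of non-symmetric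
functions) with coproduct `Δ (z n) = ∑_{s + t = n} z s ⊗ z t` (where `z 0 = 1`), the
algebra map `ε` with `ε (z n) = 0` for `n ≥ 1` is a counit, and there exists an antipode:
a `ℤ`-linear map `S : N → N` with `mul ∘ (S ⊗ id) ∘ Δ = algebraMap ∘ ε = mul ∘ (id ⊗ S) ∘ Δ`. -/
theorem stmt_9
    (Δ : FreeAlgebra ℤ {n : ℕ // 0 < n} →ₐ[ℤ]
        @TensorProduct ℤ _ (FreeAlgebra ℤ {n : ℕ // 0 < n}) (FreeAlgebra ℤ {n : ℕ // 0 < n})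
          _ _ Algebra.toModule Algebra.toModule)
    (hΔ : ∀ (n : ℕ) (hn : 0 < n), Δ (FreeAlgebra.ι ℤ ⟨n, hn⟩) =
        ∑ p ∈ Finset.HasAntidiagonal.antidiagonal n, zGen p.1 ⊗ₜ[ℤ] zGen p.2)
    (ε : FreeAlgebra ℤ {n : ℕ // 0 < n} →ₐ[ℤ] ℤ)
    (hε : ∀ n : {n : ℕ // 0 < n}, ε (FreeAlgebra.ι ℤ n) = 0) :
    ((Algebra.TensorProduct.lid ℤ (FreeAlgebra ℤ {n : ℕ // 0 < n})).toAlgHom.comp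
        ((Algebra.TensorProduct.map ε (AlgHom.id ℤ (FreeAlgebra ℤ {n : ℕ // 0 < n}))).comp Δ) =
      AlgHom.id ℤ (FreeAlgebra ℤ {n : ℕ // 0 < n})) ∧
    ((Algebra.TensorProduct.rid ℤ ℤ (FreeAlgebra ℤ {n : ℕ // 0 < n})).toAlgHom.comp
        ((Algebra.TensorProduct.map (AlgHom.id ℤ (FreeAlgebra ℤ {n : ℕ // 0 < n})) ε).comp Δ) =
      AlgHom.id ℤ (FreeAlgebra ℤ {n : ℕ // 0 < n})) ∧
    (∃ S : FreeAlgebra ℤ {n : ℕ // 0 < n} →ₗ[ℤ] FreeAlgebra ℤ {n : ℕ // 0 < n},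
      (LinearMap.mul' ℤ (FreeAlgebra ℤ {n : ℕ // 0 < n})) ∘ₗ
          (TensorProduct.map S LinearMap.id) ∘ₗ Δ.toLinearMap =
        (Algebra.linearMap ℤ (FreeAlgebra ℤ {n : ℕ // 0 < n})) ∘ₗ ε.toLinearMap ∧
      (LinearMap.mul' ℤ (FreeAlgebra ℤ {n : ℕ // 0 < n})) ∘ₗ
          (TensorProduct.map LinearMap.id S) ∘ₗ Δ.toLinearMap =
        (Algebra.linearMap ℤ (FreeAlgebra ℤ {n : ℕ // 0 < n})) ∘ₗ ε.toLinearMap) := by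
  exact ⟨lid_comp_map_counit_id_comp_eq_id hΔ hε, rid_comp_map_id_counit_comp_eq_id hΔ hε,
    antipode, mulMapLeft_antipode_comp_eq hΔ hε, mulMapRight_antipode_comp_eq hΔ hε⟩
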